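/- Let n ≥ 1. Let s : ℝ → ℝ satisfy 0 < s(a) ≤ 1 for every a > 0, and let ρ : ℝ → ℝ be nonnegative on (0,∞). Let g : ℝ → ℝ satisfy 0 < g(t) < 1 for every t > 0 and log∘g convex on (0,∞). Let α : Fin n → ℝ be a positive tuple, and let v, u : Fin n → ℝ be positive tuples with Σ_{i=1}^n v i = Σ_{i=1}^n u i and, for every k = 1,…,n, the sum of the k smallest entries of v at most the sum of the k smallest entries of u (i.e. v majorizes u). Set B_v = ∏_{i=1}^n g(v i)·s(α i) and B_u = ∏_{i=1}^n g(u i)·s(α i) (both lie in (0,1)). Then B_v·(Σ_{i=1}^n ρ(α i))/(1 − B_v) ≥ B_u·(Σ_{i=1}^n ρ(α i))/(1 − B_u). -/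
import Mathlib

open Finset

/-- Sum of the `k` smallest entries of the tuple `a`. -/
noncomputable def kSmallestSum {n : ℕ} (a : Fin n → ℝ) (k : ℕ) : ℝ :=
  ∑ i ∈ Finset.univ.filter (fun i : Fin n => (i : ℕ) < k), a (Tuple.sort a i)

/- auxiliary: slope comparison for convex functions -/
lemma slope_le_slope {f : ℝ → ℝ} (hf : ConvexOn ℝ (Set.Ioi 0) f)
    {a b c d : ℝ} (ha : 0 < a) (hc : 0 < c) (hab : a < b) (hcd : c < d)
    (hac : a ≤ c) (hbd : b ≤ d) :
    (f b - f a) / (b - a) ≤ (f d - f c) / (d - c) := by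
  have hb : (0:ℝ) < b := lt_trans ha hab
  have hd : (0:ℝ) < d := lt_trans hc hcd
  have h1 : (f b - f a) / (b - a) ≤ (f d - f a) / (d - a) :=
    hf.secant_mono (Set.mem_Ioi.2 ha) (Set.mem_Ioi.2 hb) (Set.mem_Ioi.2 hd)
      (ne_of_gt hab) (ne_of_gt (lt_of_lt_of_le hab hbd)) hbd
  have h2 : (f a - f d) / (a - d) ≤ (f c - f d) / (c - d) :=
    hf.secant_mono (Set.mem_Ioi.2 hd) (Set.mem_Ioi.2 ha) (Set.mem_Ioi.2 hc)
      (ne_of_lt (lt_of_lt_of_le hab hbd)) (ne_of_lt hcd) hac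
  have e1 : (f a - f d) / (a - d) = (f d - f a) / (d - a) := by
    rw [← neg_div_neg_eq]; ring_nf
  have e2 : (f c - f d) / (c - d) = (f d - f c) / (d - c) := by
    rw [← neg_div_neg_eq]; ring_nf
  calc (f b - f a) / (b - a) ≤ (f d - f a) / (d - a) := h1
    _ = (f a - f d) / (a - d) := e1.symm
    _ ≤ (f c - f d) / (c - d) := h2
    _ = (f d - f c) / (d - c) := e2

noncomputable def cSeq (S : ℕ → ℝ) (dflt : ℝ) (P : ℕ → Prop) [DecidablePred P] : ℕ → ℝ
  | 0 => if P 0 then S 0 else dflt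
  | (i+1) => if P (i+1) then S (i+1) else cSeq S dflt P i

lemma cSeq_cases (S : ℕ → ℝ) (dflt : ℝ) (P : ℕ → Prop) [DecidablePred P] (i : ℕ) :
    cSeq S dflt P i = dflt ∨ ∃ j, j ≤ i ∧ P j ∧ cSeq S dflt P i = S j := by
  induction i with
  | zero =>
    by_cases h : P 0
    · exact Or.inr ⟨0, le_refl _, h, by simp [cSeq, h]⟩
    · exact Or.inl (by simp [cSeq, h])
  | succ i ih =>
    by_cases h : P (i+1)
    · exact Or.inr ⟨i+1, le_refl _, h, by simp [cSeq, h]⟩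
    · have : cSeq S dflt P (i+1) = cSeq S dflt P i := by simp [cSeq, h]
      rcases ih with h1 | ⟨j, hj, hPj, hcj⟩
      · exact Or.inl (this.trans h1)
      · exact Or.inr ⟨j, le_trans hj (Nat.le_succ i), hPj, this.trans hcj⟩

lemma cSeq_of_P {S : ℕ → ℝ} {dflt : ℝ} {P : ℕ → Prop} [DecidablePred P] {i : ℕ}
    (h : P i) : cSeq S dflt P i = S i := by
  cases i with
  | zero => simp [cSeq, h]
  | succ i => simp [cSeq, h]

lemma cSeq_mono {S : ℕ → ℝ} {dflt : ℝ} {P : ℕ → Prop} [DecidablePred P]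
    (hS : ∀ j j', P j → P j' → j ≤ j' → S j ≤ S j')
    (hd : ∀ j, P j → dflt ≤ S j) : Monotone (cSeq S dflt P) := by
  apply monotone_nat_of_le_succ
  intro i
  by_cases h : P (i+1)
  · rw [cSeq_of_P h]
    rcases cSeq_cases S dflt P i with h1 | ⟨j, hj, hPj, hcj⟩
    · rw [h1]; exact hd _ h
    · rw [hcj]; exact hS j (i+1) hPj h (le_trans hj (Nat.le_succ i))
  · simp [cSeq, h]

/-- Hardy–Littlewood–Pólya style inequality for sorted sequences. -/
lemma hlp {f : ℝ → ℝ} (hf : ConvexOn ℝ (Set.Ioi 0) f) (n : ℕ) (hn : 1 ≤ n)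
    (W Z : ℕ → ℝ)
    (hWpos : ∀ i, i < n → 0 < W i) (hZpos : ∀ i, i < n → 0 < Z i)
    (hWm : ∀ i j, i ≤ j → j < n → W i ≤ W j)
    (hZm : ∀ i j, i ≤ j → j < n → Z i ≤ Z j)
    (hpre : ∀ k, k ≤ n → ∑ i ∈ range k, W i ≤ ∑ i ∈ range k, Z i)
    (htot : ∑ i ∈ range n, W i = ∑ i ∈ range n, Z i) :
    ∑ i ∈ range n, f (Z i) ≤ ∑ i ∈ range n, f (W i) := by
  classical
  set m : ℝ := min (W 0) (Z 0) with hm_def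
  have h0n : 0 < n := hn
  have hm : 0 < m := lt_min (hWpos 0 h0n) (hZpos 0 h0n)
  have hm2 : 0 < m / 2 := by linarith
  have hm2m : m / 2 < m := by linarith
  set S : ℕ → ℝ := fun i => (f (W i) - f (Z i)) / (W i - Z i) with hS_def
  set dflt : ℝ := (f m - f (m/2)) / (m - m/2) with hdflt_def
  set P : ℕ → Prop := fun i => i < n ∧ W i ≠ Z i with hP_def
  -- S at a distinct index equals the slope over (min, max)
  have hS_slope : ∀ j, P j →
      S j = (f (max (W j) (Z j)) - f (min (W j) (Z j))) /
        (max (W j) (Z j) - min (W j) (Z j)) := by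
    intro j hj
    rcases lt_or_gt_of_ne hj.2 with h | h
    · rw [max_eq_right (le_of_lt h), min_eq_left (le_of_lt h), hS_def]
      simp only
      rw [← neg_div_neg_eq]; ring_nf
    · rw [max_eq_left (le_of_lt h), min_eq_right (le_of_lt h)]
  have hminmax : ∀ j, P j → min (W j) (Z j) < max (W j) (Z j) := by
    intro j hj
    exact min_lt_max.2 hj.2
  have hminpos : ∀ j, P j → 0 < min (W j) (Z j) := by
    intro j hj
    exact lt_min (hWpos j hj.1) (hZpos j hj.1)
  have hmmin : ∀ j, P j → m ≤ min (W j) (Z j) := by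
    intro j hj
    exact le_min (le_trans (min_le_left _ _) (hWm 0 j (Nat.zero_le _) hj.1))
      (le_trans (min_le_right _ _) (hZm 0 j (Nat.zero_le _) hj.1))
  have hS_mono : ∀ j j', P j → P j' → j ≤ j' → S j ≤ S j' := by
    intro j j' hj hj' hjj
    rw [hS_slope j hj, hS_slope j' hj']
    exact slope_le_slope hf (hminpos j hj) (hminpos j' hj') (hminmax j hj) (hminmax j' hj')
      (min_le_min (hWm j j' hjj hj'.1) (hZm j j' hjj hj'.1))
      (max_le_max (hWm j j' hjj hj'.1) (hZm j j' hjj hj'.1))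
  have hdflt_le : ∀ j, P j → dflt ≤ S j := by
    intro j hj
    rw [hS_slope j hj]
    exact slope_le_slope hf hm2 (hminpos j hj) hm2m (hminmax j hj)
      (le_trans (le_of_lt hm2m) (hmmin j hj))
      (le_trans (hmmin j hj) min_le_max)
  set c : ℕ → ℝ := cSeq S dflt P with hc_def
  have hc_mono : Monotone c := cSeq_mono hS_mono hdflt_le
  have hpoint : ∀ i, i < n → f (W i) - f (Z i) = c i * (W i - Z i) := by
    intro i hi
    by_cases h : W i = Z i
    · rw [h]; ring
    · have hPi : P i := ⟨hi, h⟩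
      rw [hc_def, cSeq_of_P hPi, hS_def]
      have : W i - Z i ≠ 0 := sub_ne_zero.2 h
      field_simp
  set d : ℕ → ℝ := fun i => W i - Z i with hd_def
  have hG : ∀ k, k ≤ n → ∑ i ∈ range k, d i ≤ 0 := by
    intro k hk
    have := hpre k hk
    simp only [hd_def, sum_sub_distrib]
    linarith
  have hGn : ∑ i ∈ range n, d i = 0 := by
    simp only [hd_def, sum_sub_distrib]
    linarith [htot]
  have key : 0 ≤ ∑ i ∈ range n, c i * d i := by
    have abel := Finset.sum_range_by_parts c d n
    simp only [smul_eq_mul] at abel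
    rw [abel, hGn, mul_zero, zero_sub, le_neg, neg_zero]
    apply Finset.sum_nonpos
    intro i hi
    rw [Finset.mem_range] at hi
    have h1 : 0 ≤ c (i+1) - c i := sub_nonneg.2 (hc_mono (Nat.le_succ i))
    have h2 : ∑ j ∈ range (i+1), d j ≤ 0 := hG (i+1) (by omega)
    exact mul_nonpos_of_nonneg_of_nonpos h1 h2
  have : ∑ i ∈ range n, (f (W i) - f (Z i)) = ∑ i ∈ range n, c i * d i := by
    apply Finset.sum_congr rfl
    intro i hi
    rw [Finset.mem_range] at hi
    exact hpoint i hi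
  rw [sum_sub_distrib] at this
  linarith [key, this]

/-- Theorem 3.16: smallest claim amounts, reversed hazard rate order,
majorized transformed occurrence probabilities. -/
theorem stmt_16 {n : ℕ} (hn : 1 ≤ n) (s ρ g : ℝ → ℝ)
    (hs_pos : ∀ a > 0, 0 < s a) (hs_le : ∀ a > 0, s a ≤ 1)
    (hρ_nonneg : ∀ a > 0, 0 ≤ ρ a)
    (hg : ∀ t > 0, 0 < g t ∧ g t < 1)
    (hg_logconv : ConvexOn ℝ (Set.Ioi 0) (fun t => Real.log (g t)))
    (α v u : Fin n → ℝ)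
    (hα : ∀ i, 0 < α i) (hv : ∀ i, 0 < v i) (hu : ∀ i, 0 < u i)
    (hsum : ∑ i, v i = ∑ i, u i)
    (hmaj : ∀ k, 1 ≤ k → k ≤ n → kSmallestSum v k ≤ kSmallestSum u k) :
    (∏ i, g (u i) * s (α i)) * (∑ i, ρ (α i)) / (1 - ∏ i, g (u i) * s (α i)) ≤
      (∏ i, g (v i) * s (α i)) * (∑ i, ρ (α i)) / (1 - ∏ i, g (v i) * s (α i)) := by
  classical
  set W : ℕ → ℝ := fun i => if h : i < n then v (Tuple.sort v ⟨i, h⟩) else 1 with hW_def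
  set Z : ℕ → ℝ := fun i => if h : i < n then u (Tuple.sort u ⟨i, h⟩) else 1 with hZ_def
  -- bridging kSmallestSum to range sums
  have hbridgeW : ∀ k, k ≤ n → kSmallestSum v k = ∑ i ∈ range k, W i := by
    intro k hk
    rw [kSmallestSum, Finset.sum_filter]
    have h1 : ∀ i : Fin n, v (Tuple.sort v i) = W (i : ℕ) := by
      intro i
      simp [hW_def, i.isLt]
    have h2 : (∑ i : Fin n, if (i : ℕ) < k then v (Tuple.sort v i) else 0)
        = ∑ j ∈ range n, (if j < k then W j else 0) := by
      rw [← Fin.sum_univ_eq_sum_range (fun j => if j < k then W j else 0) n]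
      apply Finset.sum_congr rfl
      intro i _
      rw [h1]
    rw [h2, Finset.sum_ite, Finset.sum_const_zero, add_zero]
    congr 1
    ext j
    simp only [Finset.mem_filter, Finset.mem_range]
    omega
  have hbridgeZ : ∀ k, k ≤ n → kSmallestSum u k = ∑ i ∈ range k, Z i := by
    intro k hk
    rw [kSmallestSum, Finset.sum_filter]
    have h1 : ∀ i : Fin n, u (Tuple.sort u i) = Z (i : ℕ) := by
      intro i
      simp [hZ_def, i.isLt]
    have h2 : (∑ i : Fin n, if (i : ℕ) < k then u (Tuple.sort u i) else 0)
        = ∑ j ∈ range n, (if j < k then Z j else 0) := by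
      rw [← Fin.sum_univ_eq_sum_range (fun j => if j < k then Z j else 0) n]
      apply Finset.sum_congr rfl
      intro i _
      rw [h1]
    rw [h2, Finset.sum_ite, Finset.sum_const_zero, add_zero]
    congr 1
    ext j
    simp only [Finset.mem_filter, Finset.mem_range]
    omega
  have hWuniv : ∑ i ∈ range n, W i = ∑ i, v i := by
    rw [← hbridgeW n (le_refl n), kSmallestSum]
    have : Finset.univ.filter (fun i : Fin n => (i : ℕ) < n) = Finset.univ := by
      ext i; simp [i.isLt]
    rw [this]
    exact Equiv.sum_comp (Tuple.sort v) v
  have hZuniv : ∑ i ∈ range n, Z i = ∑ i, u i := by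
    rw [← hbridgeZ n (le_refl n), kSmallestSum]
    have : Finset.univ.filter (fun i : Fin n => (i : ℕ) < n) = Finset.univ := by
      ext i; simp [i.isLt]
    rw [this]
    exact Equiv.sum_comp (Tuple.sort u) u
  have hWpos : ∀ i, i < n → 0 < W i := by
    intro i hi; simp only [hW_def, dif_pos hi]; exact hv _
  have hZpos : ∀ i, i < n → 0 < Z i := by
    intro i hi; simp only [hZ_def, dif_pos hi]; exact hu _
  have hWm : ∀ i j, i ≤ j → j < n → W i ≤ W j := by
    intro i j hij hj
    have hi : i < n := lt_of_le_of_lt hij hj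
    simp only [hW_def, dif_pos hi, dif_pos hj]
    exact Tuple.monotone_sort v (show (⟨i, hi⟩ : Fin n) ≤ ⟨j, hj⟩ from hij)
  have hZm : ∀ i j, i ≤ j → j < n → Z i ≤ Z j := by
    intro i j hij hj
    have hi : i < n := lt_of_le_of_lt hij hj
    simp only [hZ_def, dif_pos hi, dif_pos hj]
    exact Tuple.monotone_sort u (show (⟨i, hi⟩ : Fin n) ≤ ⟨j, hj⟩ from hij)
  have hpre : ∀ k, k ≤ n → ∑ i ∈ range k, W i ≤ ∑ i ∈ range k, Z i := by
    intro k hk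
    rcases Nat.eq_zero_or_pos k with rfl | h1
    · simp
    · rw [← hbridgeW k hk, ← hbridgeZ k hk]
      exact hmaj k h1 hk
  have htot : ∑ i ∈ range n, W i = ∑ i ∈ range n, Z i := by
    rw [hWuniv, hZuniv, hsum]
  -- apply HLP with f = log ∘ g
  have hlp_res := hlp hg_logconv n hn W Z hWpos hZpos hWm hZm hpre htot
  -- convert to sums over Fin n
  have hWlog : ∑ i ∈ range n, Real.log (g (W i)) = ∑ i, Real.log (g (v i)) := by
    rw [← Fin.sum_univ_eq_sum_range (fun j => Real.log (g (W j))) n]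
    have : ∀ i : Fin n, Real.log (g (W (i : ℕ))) = Real.log (g (v (Tuple.sort v i))) := by
      intro i; simp [hW_def, i.isLt]
    rw [Finset.sum_congr rfl (fun i _ => this i)]
    exact Equiv.sum_comp (Tuple.sort v) (fun i => Real.log (g (v i)))
  have hZlog : ∑ i ∈ range n, Real.log (g (Z i)) = ∑ i, Real.log (g (u i)) := by
    rw [← Fin.sum_univ_eq_sum_range (fun j => Real.log (g (Z j))) n]
    have : ∀ i : Fin n, Real.log (g (Z (i : ℕ))) = Real.log (g (u (Tuple.sort u i))) := by
      intro i; simp [hZ_def, i.isLt]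
    rw [Finset.sum_congr rfl (fun i _ => this i)]
    exact Equiv.sum_comp (Tuple.sort u) (fun i => Real.log (g (u i)))
  have hlogsum : ∑ i, Real.log (g (u i)) ≤ ∑ i, Real.log (g (v i)) := by
    rw [← hWlog, ← hZlog]; exact hlp_res
  -- exponentiate
  have hprodv : ∏ i, g (v i) = Real.exp (∑ i, Real.log (g (v i))) := by
    rw [Real.exp_sum]
    exact Finset.prod_congr rfl (fun i _ => (Real.exp_log (hg _ (hv i)).1).symm)
  have hprodu : ∏ i, g (u i) = Real.exp (∑ i, Real.log (g (u i))) := by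
    rw [Real.exp_sum]
    exact Finset.prod_congr rfl (fun i _ => (Real.exp_log (hg _ (hu i)).1).symm)
  have hPle : ∏ i, g (u i) ≤ ∏ i, g (v i) := by
    rw [hprodv, hprodu]
    exact Real.exp_le_exp.2 hlogsum
  -- products with s
  have hfact : ∀ (w : Fin n → ℝ), (∀ i, 0 < w i) →
      ∏ i, g (w i) * s (α i) = (∏ i, g (w i)) * ∏ i, s (α i) :=
    fun w hw => Finset.prod_mul_distrib
  have hSα_pos : 0 < ∏ i, s (α i) := Finset.prod_pos (fun i _ => hs_pos _ (hα i))
  set Bv : ℝ := ∏ i, g (v i) * s (α i) with hBv_def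
  set Bu : ℝ := ∏ i, g (u i) * s (α i) with hBu_def
  have hBle : Bu ≤ Bv := by
    rw [hBv_def, hBu_def, hfact v hv, hfact u hu]
    exact mul_le_mul_of_nonneg_right hPle (le_of_lt hSα_pos)
  have hBv_pos : 0 < Bv :=
    Finset.prod_pos (fun i _ => mul_pos (hg _ (hv i)).1 (hs_pos _ (hα i)))
  have hBu_pos : 0 < Bu :=
    Finset.prod_pos (fun i _ => mul_pos (hg _ (hu i)).1 (hs_pos _ (hα i)))
  have hfac_le : ∀ i : Fin n, g (v i) * s (α i) < 1 := by
    intro i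
    calc g (v i) * s (α i) ≤ g (v i) * 1 :=
          mul_le_mul_of_nonneg_left (hs_le _ (hα i)) (le_of_lt (hg _ (hv i)).1)
      _ = g (v i) := mul_one _
      _ < 1 := (hg _ (hv i)).2
  have hBv_lt : Bv < 1 := by
    rw [hBv_def]
    have hne : (Finset.univ : Finset (Fin n)).Nonempty := by
      have : 0 < n := hn
      have : Nonempty (Fin n) := ⟨⟨0, this⟩⟩
      exact Finset.univ_nonempty
    calc ∏ i, g (v i) * s (α i) < ∏ i : Fin n, 1 := by
          apply Finset.prod_lt_prod_of_nonempty _ _ hne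
          · intro i _; exact mul_pos (hg _ (hv i)).1 (hs_pos _ (hα i))
          · intro i _; exact hfac_le i
      _ = 1 := Finset.prod_const_one
  have hBu_lt : Bu < 1 := lt_of_le_of_lt hBle hBv_lt
  have hR : 0 ≤ ∑ i, ρ (α i) := Finset.sum_nonneg (fun i _ => hρ_nonneg _ (hα i))
  set R : ℝ := ∑ i, ρ (α i) with hR_def
  rw [div_le_div_iff₀ (by linarith) (by linarith)]
  nlinarith [mul_nonneg (sub_nonneg.2 hBle) hR]
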